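/- Let φ ∈ Σ_r ⊗ Δ_n be a partially pure spinor, let u ∈ Spin^{c,r}(n), and write λ(u) = (g₁, g₂, z) ∈ SO(n) × SO(r) × U(1). Then u·φ is a partially pure spinor, V^{u·φ} = g₁(V^φ), and J^{u·φ} = g₁ ∘ J^φ ∘ g₁^{−1} as a map on V^{u·φ}. -/

import Mathlib

open Complex Matrix
noncomputable section
abbrev Rn (n : ℕ) := EuclideanSpace ℝ (Fin n)
abbrev SpIdx (n : ℕ) : Type := Fin (n / 2) → Fin 2
abbrev Spinor (n : ℕ) := EuclideanSpace ℂ (SpIdx n)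
abbrev TwSpinor (r n : ℕ) := EuclideanSpace ℂ (SpIdx r × SpIdx n)

def g1M : Matrix (Fin 2) (Fin 2) ℂ := !![I, 0; 0, -I]
def g2M : Matrix (Fin 2) (Fin 2) ℂ := !![0, I; I, 0]
def TM : Matrix (Fin 2) (Fin 2) ℂ := !![0, -I; I, 0]

def tensorOp {k : ℕ} (M : Fin k → Matrix (Fin 2) (Fin 2) ℂ) :
    Matrix (Fin k → Fin 2) (Fin k → Fin 2) ℂ :=
  Matrix.of fun x y => ∏ t, M t (x t) (y t)

def genMat (n : ℕ) (i : ℕ) : Matrix (SpIdx n) (SpIdx n) ℂ :=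
  if i < 2 * (n / 2) then
    tensorOp (fun t =>
      if (t : ℕ) < n / 2 - 1 - i / 2 then 1
      else if (t : ℕ) = n / 2 - 1 - i / 2 then (if i % 2 = 0 then g1M else g2M)
      else TM)
  else I • tensorOp (fun _ => TM)

def vecMat (n : ℕ) (X : Rn n) : Matrix (SpIdx n) (SpIdx n) ℂ :=
  ∑ i : Fin n, (X i : ℂ) • genMat n (i : ℕ)

def volMat (n : ℕ) : Matrix (SpIdx n) (SpIdx n) ℂ :=
  ((List.range n).map (genMat n)).prod

def actN {r n : ℕ} (M : Matrix (SpIdx n) (SpIdx n) ℂ) (φ : TwSpinor r n) : TwSpinor r n :=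
  WithLp.toLp 2 (fun p : SpIdx r × SpIdx n => ∑ b, M p.2 b * φ (p.1, b))

def actR {r n : ℕ} (M : Matrix (SpIdx r) (SpIdx r) ℂ) (φ : TwSpinor r n) : TwSpinor r n :=
  WithLp.toLp 2 (fun p : SpIdx r × SpIdx n => ∑ a, M p.1 a * φ (a, p.2))

def wedgeMat (n : ℕ) (X Y : Rn n) : Matrix (SpIdx n) (SpIdx n) ℂ :=
  vecMat n X * vecMat n Y + (((inner ℝ X Y : ℝ) : ℂ)) • 1

def etaM (r n : ℕ) (M : Matrix (SpIdx r) (SpIdx r) ℂ) (φ : TwSpinor r n) (X Y : Rn n) : ℝ :=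
  ((inner ℂ (actN (wedgeMat n X Y) (actR M φ)) φ : ℂ)).re

def eta (r n : ℕ) (φ : TwSpinor r n) (k l : ℕ) (X Y : Rn n) : ℝ :=
  etaM r n (genMat r k * genMat r l) φ X Y

def stdBasis (n : ℕ) (i : Fin n) : Rn n := EuclideanSpace.single i 1

def etaActionM (r n : ℕ) (M : Matrix (SpIdx r) (SpIdx r) ℂ) (φ : TwSpinor r n) : TwSpinor r n :=
  ∑ i : Fin n, ∑ j : Fin n,
    if i < j then
      ((etaM r n M φ (stdBasis n i) (stdBasis n j) : ℝ) : ℂ) • actN (genMat n (i:ℕ) * genMat n (j:ℕ)) φ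
    else 0

def InSigma (r n : ℕ) (φ : TwSpinor r n) : Prop :=
  r % 2 = 1 ∨ actR (((-I) ^ (r / 2)) • volMat r) φ = φ

structure IsPartiallyPure (r n : ℕ) (φ : TwSpinor r n) (V : Submodule ℝ (Rn n)) : Prop where
  lt_dim : r < n
  mem_sigma : InSigma r n φ
  unit_norm : ‖φ‖ = 1
  dim_eq : Module.finrank ℝ V = n - r
  exists_conj : ∀ X ∈ V, ∃ Y ∈ V, actN (vecMat n X) φ = I • actN (vecMat n Y) φ
  eta_plus : ∀ k l : Fin r, k < l →
    etaActionM r n (genMat r (k : ℕ) * genMat r (l : ℕ)) φ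
      + actR (genMat r (k : ℕ) * genMat r (l : ℕ)) φ = 0
  f_orth : ∀ k l : Fin r, k < l →
    (inner ℂ (actR (genMat r (k : ℕ) * genMat r (l : ℕ)) φ) φ : ℂ) = 0
  vol_orth : r = 4 → (inner ℂ (actR (volMat r) φ) φ : ℂ) = 0
-- real matrix applied to a Euclidean vector
def mvE {n : ℕ} (M : Matrix (Fin n) (Fin n) ℝ) (x : Rn n) : Rn n := WithLp.toLp 2 (fun i => ∑ j, M i j * x j)

def etaHatMat (r n : ℕ) (φ : TwSpinor r n) (k l : ℕ) : Matrix (Fin n) (Fin n) ℝ :=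
  Matrix.of fun i j => eta r n φ k l (stdBasis n j) (stdBasis n i)

def etaHatExt (r n : ℕ) (φ : TwSpinor r n) (k l : Fin r) : Matrix (Fin n) (Fin n) ℝ :=
  if k = l then 0 else if k < l then etaHatMat r n φ (k : ℕ) (l : ℕ)
  else -(etaHatMat r n φ (l : ℕ) (k : ℕ))

def etaPhi (r n : ℕ) (φ : TwSpinor r n) (C : Matrix (Fin r) (Fin r) ℝ) :
    Matrix (Fin n) (Fin n) ℝ :=
  ∑ k : Fin r, ∑ l : Fin r, if k < l then C k l • etaHatMat r n φ (k : ℕ) (l : ℕ) else 0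

def IsEtaFrame (r n : ℕ) (φ : TwSpinor r n) (V : Submodule ℝ (Rn n)) (v : Fin r → Rn n) : Prop :=
  Orthonormal ℝ v ∧ (∀ k, v k ∈ Vᗮ) ∧
    ∀ k l : Fin r, k < l → ∀ X Y : Rn n,
      eta r n φ (k : ℕ) (l : ℕ) X Y
        = (inner ℝ (v k) X : ℝ) * (inner ℝ (v l) Y : ℝ) - (inner ℝ (v l) X : ℝ) * (inner ℝ (v k) Y : ℝ)

def IsJ (r n : ℕ) (φ : TwSpinor r n) (V : Submodule ℝ (Rn n)) (J : Rn n → Rn n) : Prop :=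
  (∀ X ∈ V, J X ∈ V) ∧ ∀ X ∈ V, actN (vecMat n X) φ = I • actN (vecMat n (J X)) φ

def Fop (r n : ℕ) (φ : TwSpinor r n) : TwSpinor r n :=
  ((-I) ^ (n / 2) * I ^ (r / 2)) • actN (volMat n) (actR (volMat r) φ)

def tripleFrame (m r : ℕ) (v vJ : Fin m → Rn (2*m+r)) (w : Fin r → Rn (2*m+r)) :
    Fin (2*m+r) → Rn (2*m+r) :=
  fun i => if h : (i : ℕ) < 2*m then
      (if (i : ℕ) % 2 = 0 then v ⟨(i:ℕ)/2, by omega⟩ else vJ ⟨(i:ℕ)/2, by omega⟩)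
    else w ⟨(i:ℕ) - 2*m, by have := i.isLt; omega⟩

def frameDet (n : ℕ) (u : Fin n → Rn n) : ℝ := (Matrix.of fun i j => u i j).det

def TripleSign (m r : ℕ) (φ : TwSpinor r (2*m+r)) (V : Submodule ℝ (Rn (2*m+r)))
    (J : Rn (2*m+r) → Rn (2*m+r)) (c : ℝ) : Prop :=
  ∃ (v : Fin m → Rn (2*m+r)) (w : Fin r → Rn (2*m+r)),
    (∀ j, v j ∈ V) ∧ IsEtaFrame r (2*m+r) φ V w ∧
    Orthonormal ℝ (tripleFrame m r v (fun j => J (v j)) w) ∧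
    frameDet (2*m+r) (tripleFrame m r v (fun j => J (v j)) w) = c

def IsCompatTriple (m r : ℕ) (V : Submodule ℝ (Rn (2*m+r)))
    (J : Rn (2*m+r) → Rn (2*m+r)) (w : Fin r → Rn (2*m+r)) : Prop :=
  Module.finrank ℝ V = 2*m ∧ (∀ x ∈ V, J x ∈ V) ∧ (∀ x ∈ V, J (J x) = -x) ∧
  (∀ x ∈ V, ∀ y ∈ V, (inner ℝ (J x) (J y) : ℝ) = (inner ℝ x y : ℝ)) ∧
  Orthonormal ℝ w ∧ (∀ k, w k ∈ Vᗮ)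

def IsPosTriple (m r : ℕ) (V : Submodule ℝ (Rn (2*m+r)))
    (J : Rn (2*m+r) → Rn (2*m+r)) (w : Fin r → Rn (2*m+r)) : Prop :=
  IsCompatTriple m r V J w ∧ ∃ v : Fin m → Rn (2*m+r), (∀ j, v j ∈ V) ∧
    Orthonormal ℝ (tripleFrame m r v (fun j => J (v j)) w) ∧
    frameDet (2*m+r) (tripleFrame m r v (fun j => J (v j)) w) = 1

def SpinMat (n : ℕ) : Set (Matrix (SpIdx n) (SpIdx n) ℂ) :=
  {M | ∃ L : List (Rn n), L.length % 2 = 0 ∧ (∀ x ∈ L, ‖x‖ = 1) ∧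
        M = (L.map (vecMat n)).prod}

def kronOp {r n : ℕ} (h : Matrix (SpIdx r) (SpIdx r) ℂ) (g : Matrix (SpIdx n) (SpIdx n) ℂ) :
    Matrix (SpIdx r × SpIdx n) (SpIdx r × SpIdx n) ℂ :=
  Matrix.of fun p q => h p.1 q.1 * g p.2 q.2

def SpinCR (r n : ℕ) : Set (Matrix (SpIdx r × SpIdx n) (SpIdx r × SpIdx n) ℂ) :=
  {U | ∃ g ∈ SpinMat n, ∃ h ∈ SpinMat r, ∃ z : ℂ, ‖z‖ = 1 ∧ U = z • kronOp h g}

def SpinCsub (r n : ℕ) : Set (Matrix (SpIdx r × SpIdx n) (SpIdx r × SpIdx n) ℂ) :=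
  {U | ∃ h ∈ SpinMat r, ∃ z : ℂ, ‖z‖ = 1 ∧ U = z • kronOp h 1}

def twAct {r n : ℕ} (U : Matrix (SpIdx r × SpIdx n) (SpIdx r × SpIdx n) ℂ)
    (φ : TwSpinor r n) : TwSpinor r n :=
  WithLp.toLp 2 (fun p : SpIdx r × SpIdx n => ∑ q, U p q * φ q)

def SOset (r : ℕ) : Set (Matrix (Fin r) (Fin r) ℝ) := {B | B * Bᵀ = 1 ∧ B.det = 1}

def SOg (r : ℕ) : Subgroup (Matrix.orthogonalGroup (Fin r) ℝ) :=
  MonoidHom.ker (Matrix.detMonoidHom.comp (Matrix.orthogonalGroup (Fin r) ℝ).subtype)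

def soMat {r : ℕ} (B : ↥(SOg r)) : Matrix (Fin r) (Fin r) ℝ := ((B : Matrix.orthogonalGroup (Fin r) ℝ) : Matrix (Fin r) (Fin r) ℝ)

def toCvec (m r : ℕ) (x : Rn (2*m+r)) : Fin m → ℂ :=
  fun j => (x ⟨2*(j:ℕ), by have := j.isLt; omega⟩ : ℝ) + (x ⟨2*(j:ℕ)+1, by have := j.isLt; omega⟩ : ℝ) * I

def blockMap (m r : ℕ) (A : Matrix (Fin m) (Fin m) ℂ) (B : Matrix (Fin r) (Fin r) ℝ) :
    Rn (2*m+r) → Rn (2*m+r) :=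
  fun x => WithLp.toLp 2 (fun i : Fin (2*m+r) =>
    if h : (i : ℕ) < 2*m then
      (if (i : ℕ) % 2 = 0 then (A.mulVec (toCvec m r x) ⟨(i:ℕ)/2, by omega⟩).re
       else (A.mulVec (toCvec m r x) ⟨(i:ℕ)/2, by omega⟩).im)
    else ∑ k : Fin r, B ⟨(i:ℕ) - 2*m, by have := i.isLt; omega⟩ k
            * x ⟨2*m + (k:ℕ), by have := k.isLt; omega⟩)

open scoped Kronecker

/-!
Write `u = z·(h ⊗ g)`. Conjugation by `g ∈ Spin(n)` acts on `ℝⁿ` by an isometry `σ` (a product of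
reflections), and the intertwining relation forces `g₁ = σ⁻¹`; conjugation by `h ∈ Spin(r)` acts
on `ℝʳ` by an isometry `τ`. So Clifford multiplication on `u·φ` is transported back to `φ`:
`g₁X·(u·φ) = u·(X·φ)`, `f_k f_l·(u·φ) = u·(τf_k τf_l·φ)`, and `η^{u·φ}` evaluated on
`(X, Y)` is the corresponding form of `φ` evaluated on `(σX, σY)`. This gives `V^{u·φ} = g₁(V^φ)`
and the formula for `J`. Condition (ii) for `φ` extends by bilinearity from the pairs `(f_k, f_l)`
to all orthonormal pairs (the diagonal terms carry the factor `⟨τf_k, τf_l⟩ = 0`), and the action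
`∑_{i<j} η(eᵢ, eⱼ) eᵢeⱼ` of a 2-form does not depend on the orthonormal basis, so (ii) passes to
`u·φ`. Finally `u` is unitary, and `h`, an even product of vectors, commutes with the volume
element; this gives unit length, `u·φ ∈ Σ_r ⊗ Δ_n` and (iii).
-/

section Pauli

lemma g1M_mul_self : g1M * g1M = -1 := by
  ext i j; fin_cases i <;> fin_cases j <;> simp [g1M, Matrix.mul_apply]

lemma g2M_mul_self : g2M * g2M = -1 := by
  ext i j; fin_cases i <;> fin_cases j <;> simp [g2M, Matrix.mul_apply]

lemma TM_mul_self : TM * TM = 1 := by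
  ext i j; fin_cases i <;> fin_cases j <;> simp [TM, Matrix.mul_apply]

lemma g1M_mul_g2M : g1M * g2M = -(g2M * g1M) := by
  ext i j; fin_cases i <;> fin_cases j <;> simp [g1M, g2M, Matrix.mul_apply]

lemma g1M_mul_TM : g1M * TM = -(TM * g1M) := by
  ext i j; fin_cases i <;> fin_cases j <;> simp [g1M, TM, Matrix.mul_apply]

lemma g2M_mul_TM : g2M * TM = -(TM * g2M) := by
  ext i j; fin_cases i <;> fin_cases j <;> simp [g2M, TM, Matrix.mul_apply]

lemma g1M_conjTranspose : g1Mᴴ = -g1M := by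
  ext i j; fin_cases i <;> fin_cases j <;> simp [g1M]

lemma g2M_conjTranspose : g2Mᴴ = -g2M := by
  ext i j; fin_cases i <;> fin_cases j <;> simp [g2M]

lemma TM_conjTranspose : TMᴴ = TM := by
  ext i j; fin_cases i <;> fin_cases j <;> simp [TM]

end Pauli

section TensorOp

variable {k : ℕ}

lemma tensorOp_mul (M N : Fin k → Matrix (Fin 2) (Fin 2) ℂ) :
    tensorOp M * tensorOp N = tensorOp (fun t => M t * N t) := by
  ext x y
  simp only [tensorOp, Matrix.mul_apply, Matrix.of_apply, Finset.prod_univ_sum]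
  simp [← Finset.prod_mul_distrib]

lemma tensorOp_one : tensorOp (fun _ : Fin k => (1 : Matrix (Fin 2) (Fin 2) ℂ)) = 1 := by
  ext x y
  by_cases h : x = y
  · subst h; simp [tensorOp]
  · obtain ⟨t, ht⟩ := Function.ne_iff.mp h
    simp [tensorOp, Matrix.one_apply, h, Finset.prod_eq_zero (Finset.mem_univ t), ht]

lemma tensorOp_conjTranspose (M : Fin k → Matrix (Fin 2) (Fin 2) ℂ) :
    (tensorOp M)ᴴ = tensorOp (fun t => (M t)ᴴ) := by
  ext x y
  simp [tensorOp, Matrix.conjTranspose_apply]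

lemma tensorOp_eq_neg {M N : Fin k → Matrix (Fin 2) (Fin 2) ℂ} (t₀ : Fin k)
    (h₀ : M t₀ = -N t₀) (h : ∀ t, t ≠ t₀ → M t = N t) :
    tensorOp M = -tensorOp N := by
  ext x y
  simp only [tensorOp, Matrix.neg_apply, Matrix.of_apply]
  rw [← Finset.mul_prod_erase _ _ (Finset.mem_univ t₀),
    ← Finset.mul_prod_erase _ (fun t => N t (x t) (y t)) (Finset.mem_univ t₀), h₀,
    Finset.prod_congr rfl fun t ht => by rw [h t (Finset.ne_of_mem_erase ht)]]
  simp

lemma tensorOp_anticomm {M N : Fin k → Matrix (Fin 2) (Fin 2) ℂ} (t₀ : Fin k)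
    (h₀ : M t₀ * N t₀ = -(N t₀ * M t₀)) (h : ∀ t, t ≠ t₀ → M t * N t = N t * M t) :
    tensorOp M * tensorOp N = -(tensorOp N * tensorOp M) := by
  rw [tensorOp_mul, tensorOp_mul]
  exact tensorOp_eq_neg t₀ h₀ h

end TensorOp

section GenMat

def slotOp (k s : ℕ) (G : Matrix (Fin 2) (Fin 2) ℂ) (t : Fin k) : Matrix (Fin 2) (Fin 2) ℂ :=
  if (t : ℕ) < s then 1 else if (t : ℕ) = s then G else TM

def pauliOf (i : ℕ) : Matrix (Fin 2) (Fin 2) ℂ := if i % 2 = 0 then g1M else g2M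

lemma pauliOf_mul_self (i : ℕ) : pauliOf i * pauliOf i = -1 := by
  unfold pauliOf; split_ifs <;> simp [g1M_mul_self, g2M_mul_self]

lemma pauliOf_mul_TM (i : ℕ) : pauliOf i * TM = -(TM * pauliOf i) := by
  unfold pauliOf; split_ifs <;> simp [g1M_mul_TM, g2M_mul_TM]

lemma TM_mul_pauliOf (i : ℕ) : TM * pauliOf i = -(pauliOf i * TM) := by
  rw [pauliOf_mul_TM, neg_neg]

lemma pauliOf_conjTranspose (i : ℕ) : (pauliOf i)ᴴ = -pauliOf i := by
  unfold pauliOf; split_ifs <;> simp [g1M_conjTranspose, g2M_conjTranspose]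

lemma pauliOf_anticomm {i j : ℕ} (h : i % 2 ≠ j % 2) :
    pauliOf i * pauliOf j = -(pauliOf j * pauliOf i) := by
  unfold pauliOf
  split_ifs with hi hj hj <;> first | omega | simp [g1M_mul_g2M]

variable {k : ℕ}

lemma slotOp_mul_self {s : ℕ} (hs : s < k) {G : Matrix (Fin 2) (Fin 2) ℂ} (hG : G * G = -1) :
    tensorOp (slotOp k s G) * tensorOp (slotOp k s G) = -1 := by
  rw [tensorOp_mul, ← tensorOp_one]
  refine tensorOp_eq_neg ⟨s, hs⟩ (by simp [slotOp, hG]) fun t ht => ?_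
  have : (t : ℕ) ≠ s := fun h => ht (Fin.ext h)
  simp only [slotOp]; split_ifs <;> simp [TM_mul_self]

lemma slotOp_conjTranspose {s : ℕ} (hs : s < k) {G : Matrix (Fin 2) (Fin 2) ℂ} (hG : Gᴴ = -G) :
    (tensorOp (slotOp k s G))ᴴ = -tensorOp (slotOp k s G) := by
  rw [tensorOp_conjTranspose]
  refine tensorOp_eq_neg ⟨s, hs⟩ (by simp [slotOp, hG]) fun t ht => ?_
  have : (t : ℕ) ≠ s := fun h => ht (Fin.ext h)
  simp only [slotOp]; split_ifs <;> simp [TM_conjTranspose]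

lemma slotOp_anticomm_of_lt {s s' : ℕ} (hss' : s < s') (hs' : s' < k)
    (G : Matrix (Fin 2) (Fin 2) ℂ) {G' : Matrix (Fin 2) (Fin 2) ℂ}
    (hG' : TM * G' = -(G' * TM)) :
    tensorOp (slotOp k s G) * tensorOp (slotOp k s' G')
      = -(tensorOp (slotOp k s' G') * tensorOp (slotOp k s G)) := by
  refine tensorOp_anticomm ⟨s', hs'⟩ ?_ fun t ht => ?_
  · simpa [slotOp, hss'.not_gt, hss'.ne'] using hG'
  · have : (t : ℕ) ≠ s' := fun h => ht (Fin.ext h)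
    simp only [slotOp]; split_ifs <;> first | omega | simp

lemma slotOp_anticomm_same {s : ℕ} (hs : s < k) {G G' : Matrix (Fin 2) (Fin 2) ℂ}
    (hGG' : G * G' = -(G' * G)) :
    tensorOp (slotOp k s G) * tensorOp (slotOp k s G')
      = -(tensorOp (slotOp k s G') * tensorOp (slotOp k s G)) := by
  refine tensorOp_anticomm ⟨s, hs⟩ (by simpa [slotOp] using hGG') fun t ht => ?_
  have : (t : ℕ) ≠ s := fun h => ht (Fin.ext h)
  simp only [slotOp]; split_ifs <;> simp

lemma slotOp_anticomm_TM {s : ℕ} (hs : s < k) {G : Matrix (Fin 2) (Fin 2) ℂ}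
    (hG : G * TM = -(TM * G)) :
    tensorOp (slotOp k s G) * tensorOp (fun _ => TM)
      = -(tensorOp (fun _ => TM) * tensorOp (slotOp k s G)) := by
  refine tensorOp_anticomm ⟨s, hs⟩ (by simpa [slotOp] using hG) fun t ht => ?_
  have : (t : ℕ) ≠ s := fun h => ht (Fin.ext h)
  simp only [slotOp]; split_ifs <;> simp

variable {n : ℕ}

lemma genMat_of_lt {i : ℕ} (hi : i < 2 * (n / 2)) :
    genMat n i = tensorOp (slotOp (n / 2) (n / 2 - 1 - i / 2) (pauliOf i)) := by
  rw [genMat, if_pos hi]; rfl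

lemma genMat_of_ge {i : ℕ} (hi : ¬ i < 2 * (n / 2)) :
    genMat n i = I • tensorOp (fun _ => TM) := by
  rw [genMat, if_neg hi]

lemma genMat_mul_self (i : ℕ) : genMat n i * genMat n i = -1 := by
  by_cases h : i < 2 * (n / 2)
  · rw [genMat_of_lt h]
    exact slotOp_mul_self (by omega) (pauliOf_mul_self i)
  · rw [genMat_of_ge h, smul_mul_smul_comm, tensorOp_mul]
    simp [TM_mul_self, tensorOp_one]

lemma genMat_conjTranspose (i : ℕ) : (genMat n i)ᴴ = -genMat n i := by
  by_cases h : i < 2 * (n / 2)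
  · rw [genMat_of_lt h]
    exact slotOp_conjTranspose (by omega) (pauliOf_conjTranspose i)
  · simp [genMat_of_ge h, tensorOp_conjTranspose, TM_conjTranspose]

lemma genMat_anticomm_of_lt {i j : ℕ} (hj : j < 2 * (n / 2)) (hij : i / 2 < j / 2) :
    genMat n i * genMat n j = -(genMat n j * genMat n i) := by
  rw [genMat_of_lt (by omega), genMat_of_lt hj,
    slotOp_anticomm_of_lt (by omega) (by omega) _ (TM_mul_pauliOf i), neg_neg]

lemma genMat_anticomm {i j : ℕ} (hi : i < n) (hj : j < n) (hij : i ≠ j) :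
    genMat n i * genMat n j = -(genMat n j * genMat n i) := by
  rcases lt_trichotomy (i / 2) (j / 2) with h | h | h
  · by_cases hj' : j < 2 * (n / 2)
    · exact genMat_anticomm_of_lt hj' h
    · rw [genMat_of_lt (by omega), genMat_of_ge hj', mul_smul_comm, smul_mul_assoc, ← smul_neg,
        slotOp_anticomm_TM (by omega) (pauliOf_mul_TM i)]
  · by_cases hi' : i < 2 * (n / 2)
    · rw [genMat_of_lt hi', genMat_of_lt (by omega), ← h]
      exact slotOp_anticomm_same (by omega) (pauliOf_anticomm (by omega))
    · omega
  · by_cases hi' : i < 2 * (n / 2)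
    · rw [genMat_anticomm_of_lt hi' h, neg_neg]
    · rw [genMat_of_lt (i := j) (by omega), genMat_of_ge hi', mul_smul_comm, smul_mul_assoc,
        slotOp_anticomm_TM (by omega) (pauliOf_mul_TM j), smul_neg, neg_neg]

end GenMat

section VecMat

variable {n : ℕ}

lemma vecMat_add (x y : Rn n) : vecMat n (x + y) = vecMat n x + vecMat n y := by
  simp [vecMat, add_smul, Finset.sum_add_distrib]

lemma vecMat_smul (c : ℝ) (x : Rn n) : vecMat n (c • x) = (c : ℂ) • vecMat n x := by
  simp only [vecMat, Finset.smul_sum, smul_smul, PiLp.smul_apply, smul_eq_mul, ofReal_mul]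

lemma vecMat_sub (x y : Rn n) : vecMat n (x - y) = vecMat n x - vecMat n y := by
  simp [vecMat, sub_smul]

lemma vecMat_mul_vecMat (x y : Rn n) :
    vecMat n x * vecMat n y
      = ∑ i : Fin n, ∑ j : Fin n, ((x i * y j : ℝ) : ℂ) • (genMat n i * genMat n j) := by
  simp only [vecMat, Finset.sum_mul_sum, smul_mul_smul_comm, ofReal_mul]

lemma vecMat_mul_add_mul (x y : Rn n) :
    vecMat n x * vecMat n y + vecMat n y * vecMat n x = ((-2 * inner ℝ x y : ℝ) : ℂ) • 1 := by
  have hpair : ∀ i j : Fin n, genMat n i * genMat n j + genMat n j * genMat n i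
      = if i = j then (-2 : ℂ) • 1 else 0 := by
    intro i j
    split_ifs with h
    · subst h; rw [genMat_mul_self]; module
    · rw [genMat_anticomm i.isLt j.isLt (Fin.val_ne_of_ne h), neg_add_cancel]
  have hyx : vecMat n y * vecMat n x
      = ∑ i : Fin n, ∑ j : Fin n, ((x i * y j : ℝ) : ℂ) • (genMat n j * genMat n i) := by
    rw [vecMat_mul_vecMat, Finset.sum_comm]
    simp only [mul_comm (y _)]
  rw [vecMat_mul_vecMat, hyx, ← Finset.sum_add_distrib]
  simp_rw [← Finset.sum_add_distrib, ← smul_add, hpair, smul_ite, smul_zero, Finset.sum_ite_eq,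
    Finset.mem_univ, if_true, smul_smul, ← Finset.sum_smul]
  congr 1
  simp [PiLp.inner_apply, Finset.mul_sum, mul_comm]

lemma vecMat_mul_self (x : Rn n) : vecMat n x * vecMat n x = ((-‖x‖ ^ 2 : ℝ) : ℂ) • 1 := by
  have h := vecMat_mul_add_mul x x
  rw [real_inner_self_eq_norm_sq, ← two_smul ℂ] at h
  rw [← smul_right_injective _ (two_ne_zero' ℂ) |>.eq_iff, h, smul_smul]
  push_cast; ring_nf

lemma vecMat_conjTranspose (x : Rn n) : (vecMat n x)ᴴ = -vecMat n x := by
  simp [vecMat, Matrix.conjTranspose_sum, genMat_conjTranspose]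

lemma vecMat_stdBasis (i : Fin n) : vecMat n (_root_.stdBasis n i) = genMat n i := by
  rw [vecMat, Finset.sum_eq_single i] <;> simp +contextual [_root_.stdBasis]

end VecMat

section SpinGroup

variable {n : ℕ}

lemma vecMat_injective : Function.Injective (vecMat n) := by
  intro x y hxy
  have h := vecMat_mul_self (x - y)
  rw [vecMat_sub, hxy, sub_self, zero_mul, ← zero_smul ℂ 1] at h
  have := smul_left_injective ℂ one_ne_zero h
  simp_all [sub_eq_zero]

lemma vecMat_mem_unitary {x : Rn n} (hx : ‖x‖ = 1) :
    vecMat n x ∈ unitary (Matrix (SpIdx n) (SpIdx n) ℂ) := by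
  have hsq : vecMat n x * vecMat n x = -1 := by simp [vecMat_mul_self, hx]
  rw [Unitary.mem_iff, star_eq_conjTranspose, vecMat_conjTranspose, neg_mul, mul_neg, hsq, neg_neg]
  exact ⟨rfl, rfl⟩

lemma mem_unitary_of_mem_spinMat {g : Matrix (SpIdx n) (SpIdx n) ℂ} (hg : g ∈ SpinMat n) :
    g ∈ unitary (Matrix (SpIdx n) (SpIdx n) ℂ) := by
  obtain ⟨L, -, hL, rfl⟩ := hg
  refine Submonoid.list_prod_mem _ fun a ha => ?_
  obtain ⟨x, hx, rfl⟩ := List.mem_map.mp ha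
  exact vecMat_mem_unitary (hL x hx)

lemma vecMat_mul_vecMat_reflection {v : Rn n} (hv : ‖v‖ = 1) (y : Rn n) :
    vecMat n y * vecMat n v = vecMat n v * vecMat n ((ℝ ∙ v).reflection y) := by
  have hcl := vecMat_mul_add_mul v y
  rw [Submodule.reflection_singleton_apply, hv, vecMat_sub, two_smul, vecMat_add, vecMat_smul,
    mul_sub, mul_add, mul_smul_comm, vecMat_mul_self, hv]
  simp only [RCLike.ofReal_real_eq_id, id, one_pow, div_one, ofReal_neg, ofReal_one, neg_smul,
    one_smul, smul_neg] at hcl ⊢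
  rw [← sub_eq_iff_eq_add'.mpr hcl.symm]
  push_cast; module

lemma exists_conj_vecMat_of_mem_spinMat {g : Matrix (SpIdx n) (SpIdx n) ℂ} (hg : g ∈ SpinMat n) :
    ∃ σ : Rn n ≃ₗᵢ[ℝ] Rn n, ∀ y, vecMat n y * g = g * vecMat n (σ y) := by
  obtain ⟨L, -, hL, rfl⟩ := hg
  induction L with
  | nil => exact ⟨LinearIsometryEquiv.refl ℝ _, by simp⟩
  | cons v L ih =>
    obtain ⟨σ, hσ⟩ := ih fun x hx => hL x (List.mem_cons_of_mem v hx)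
    refine ⟨(ℝ ∙ v).reflection.trans σ, fun y => ?_⟩
    simp only [List.map_cons, List.prod_cons, LinearIsometryEquiv.trans_apply]
    rw [← mul_assoc, vecMat_mul_vecMat_reflection (hL v List.mem_cons_self), mul_assoc, hσ,
      mul_assoc]

lemma exists_conjTranspose_mul_vecMat_mul_of_mem_spinMat {g : Matrix (SpIdx n) (SpIdx n) ℂ}
    (hg : g ∈ SpinMat n) : ∃ σ : Rn n ≃ₗᵢ[ℝ] Rn n, ∀ y, gᴴ * vecMat n y * g = vecMat n (σ y) := by
  obtain ⟨σ, hσ⟩ := exists_conj_vecMat_of_mem_spinMat hg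
  refine ⟨σ, fun y => ?_⟩
  rw [mul_assoc, hσ, ← mul_assoc, ← star_eq_conjTranspose,
    Unitary.star_mul_self_of_mem (mem_unitary_of_mem_spinMat hg), one_mul]

lemma apply_eq_symm_of_intertwines {g : Matrix (SpIdx n) (SpIdx n) ℂ} (hg : gᴴ * g = 1)
    {σ : Rn n ≃ₗᵢ[ℝ] Rn n} (hσ : ∀ y, gᴴ * vecMat n y * g = vecMat n (σ y))
    {g₁ : Rn n → Rn n} (hg₁ : ∀ x, g * vecMat n x = vecMat n (g₁ x) * g) (x : Rn n) :
    g₁ x = σ.symm x := by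
  rw [σ.eq_symm_apply]
  apply vecMat_injective
  rw [← hσ, mul_assoc, ← hg₁, ← mul_assoc, hg, one_mul]

end SpinGroup

section Volume

variable {r : ℕ}

lemma list_prod_mul_of_anticomm {A : Type*} [Ring A] [Algebra ℂ A] (x : A) (L : List A)
    (hL : ∀ a ∈ L, a * x = -(x * a)) : L.prod * x = (-1 : ℂ) ^ L.length • (x * L.prod) := by
  induction L with
  | nil => simp
  | cons a L ih =>
    rw [List.prod_cons, mul_assoc, ih fun b hb => hL b (List.mem_cons_of_mem a hb), mul_smul_comm,
      ← mul_assoc, hL a List.mem_cons_self, List.length_cons, pow_succ]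
    simp [mul_assoc]

lemma genMat_mul_prod_range {i : ℕ} (hi : i < r) {m : ℕ} (hm : m ≤ r) :
    genMat r i * ((List.range m).map (genMat r)).prod
      = (-1 : ℂ) ^ (m + if i < m then 1 else 0)
          • (((List.range m).map (genMat r)).prod * genMat r i) := by
  induction m with
  | zero => simp
  | succ m ih =>
    rw [List.range_succ, List.map_append, List.prod_append, ← mul_assoc,
      ih (by omega), smul_mul_assoc, List.map_singleton, List.prod_singleton, mul_assoc, mul_assoc]
    rcases eq_or_ne i m with rfl | him
    · simp [pow_succ]
    · rw [genMat_anticomm hi (by omega) him, mul_neg, smul_neg, ← neg_smul]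
      congr 1
      by_cases h : i < m
      · simp [h, show i < m + 1 by omega, pow_succ]
      · simp [h, show ¬ i < m + 1 by omega, pow_succ]

lemma genMat_mul_volMat (hr : Even r) {i : ℕ} (hi : i < r) :
    genMat r i * volMat r = -(volMat r * genMat r i) := by
  rw [volMat, genMat_mul_prod_range hi le_rfl, if_pos hi, pow_succ, hr.neg_one_pow]
  simp

lemma vecMat_mul_volMat (hr : Even r) (v : Rn r) :
    vecMat r v * volMat r = -(volMat r * vecMat r v) := by
  simp [vecMat, Finset.sum_mul, Finset.mul_sum, genMat_mul_volMat hr]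

lemma volMat_commute_of_mem_spinMat (hr : Even r) {h : Matrix (SpIdx r) (SpIdx r) ℂ}
    (hh : h ∈ SpinMat r) : volMat r * h = h * volMat r := by
  obtain ⟨L, hlen, -, rfl⟩ := hh
  rw [list_prod_mul_of_anticomm _ _ fun a ha => ?_, List.length_map,
    (Nat.even_iff.mpr hlen).neg_one_pow, one_smul]
  obtain ⟨v, -, rfl⟩ := List.mem_map.mp ha
  exact vecMat_mul_volMat hr v

end Volume

section Action

variable {r n : ℕ}

lemma twAct_eq (U : Matrix (SpIdx r × SpIdx n) (SpIdx r × SpIdx n) ℂ) (φ : TwSpinor r n) :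
    twAct U φ = toEuclideanCLM (𝕜 := ℂ) U φ := rfl

lemma actN_eq (M : Matrix (SpIdx n) (SpIdx n) ℂ) (φ : TwSpinor r n) :
    actN M φ = twAct (1 ⊗ₖ M) φ := by
  ext p
  simp [actN, twAct, Fintype.sum_prod_type, Matrix.one_apply]

lemma actR_eq (M : Matrix (SpIdx r) (SpIdx r) ℂ) (φ : TwSpinor r n) :
    actR M φ = twAct (M ⊗ₖ 1) φ := by
  ext p
  simp [actR, twAct, Fintype.sum_prod_type, Matrix.one_apply]

lemma add_actN (M N : Matrix (SpIdx n) (SpIdx n) ℂ) (φ : TwSpinor r n) :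
    actN (M + N) φ = actN M φ + actN N φ := by
  simp [actN_eq, kronecker_add, twAct_eq]

lemma smul_actN (c : ℂ) (M : Matrix (SpIdx n) (SpIdx n) ℂ) (φ : TwSpinor r n) :
    actN (c • M) φ = c • actN M φ := by
  simp [actN_eq, kronecker_smul, twAct_eq]

lemma neg_actN (M : Matrix (SpIdx n) (SpIdx n) ℂ) (φ : TwSpinor r n) :
    actN (-M) φ = -actN M φ := by
  simpa using smul_actN (-1) M φ

lemma add_actR (M N : Matrix (SpIdx r) (SpIdx r) ℂ) (φ : TwSpinor r n) :
    actR (M + N) φ = actR M φ + actR N φ := by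
  simp [actR_eq, add_kronecker, twAct_eq]

lemma smul_actR (c : ℂ) (M : Matrix (SpIdx r) (SpIdx r) ℂ) (φ : TwSpinor r n) :
    actR (c • M) φ = c • actR M φ := by
  simp [actR_eq, smul_kronecker, twAct_eq]

lemma actN_add (M : Matrix (SpIdx n) (SpIdx n) ℂ) (φ ψ : TwSpinor r n) :
    actN M (φ + ψ) = actN M φ + actN M ψ := by
  simp [actN_eq, twAct_eq]

lemma actN_smul (M : Matrix (SpIdx n) (SpIdx n) ℂ) (c : ℂ) (φ : TwSpinor r n) :
    actN M (c • φ) = c • actN M φ := by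
  simp [actN_eq, twAct_eq]

lemma twAct_mul (A B : Matrix (SpIdx r × SpIdx n) (SpIdx r × SpIdx n) ℂ) (φ : TwSpinor r n) :
    twAct (A * B) φ = twAct A (twAct B φ) := by
  simp [twAct_eq]

lemma inner_twAct_twAct {U : Matrix (SpIdx r × SpIdx n) (SpIdx r × SpIdx n) ℂ} (hU : Uᴴ * U = 1)
    (φ ψ : TwSpinor r n) : inner ℂ (twAct U φ) (twAct U ψ) = inner ℂ φ ψ := by
  rw [twAct_eq, twAct_eq, ← ContinuousLinearMap.adjoint_inner_right,
    ← ContinuousLinearMap.star_eq_adjoint, ← map_star, ← mul_apply_eq_comp, ← map_mul,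
    star_eq_conjTranspose, hU, map_one, one_apply_eq_self]

lemma norm_twAct {U : Matrix (SpIdx r × SpIdx n) (SpIdx r × SpIdx n) ℂ} (hU : Uᴴ * U = 1)
    (φ : TwSpinor r n) : ‖twAct U φ‖ = ‖φ‖ := by
  have h := inner_twAct_twAct hU φ φ
  rw [inner_self_eq_norm_sq_to_K, inner_self_eq_norm_sq_to_K] at h
  exact (sq_eq_sq₀ (norm_nonneg _) (norm_nonneg _)).mp (mod_cast h)

end Action

section OrthonormalSums

variable {E F : Type*} [NormedAddCommGroup E] [InnerProductSpace ℝ E] [AddCommGroup F] [Module ℝ F]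
  {ι κ : Type*} [Fintype ι] [Fintype κ]

lemma sum_apply_self_orthonormalBasis (f : E →ₗ[ℝ] E →ₗ[ℝ] F) (b : OrthonormalBasis ι ℝ E)
    (c : OrthonormalBasis κ ℝ E) : ∑ i, f (b i) (b i) = ∑ j, f (c j) (c j) :=
  calc ∑ i, f (b i) (b i) = ∑ i, f (b i) (∑ j, inner ℝ (c j) (b i) • c j) := by
        simp_rw [c.sum_repr']
    _ = ∑ j, f (∑ i, inner ℝ (b i) (c j) • b i) (c j) := by
        simp only [map_sum, map_smul, LinearMap.sum_apply, LinearMap.smul_apply,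
          real_inner_comm (b _)]
        exact Finset.sum_comm
    _ = ∑ j, f (c j) (c j) := by simp_rw [b.sum_repr']

-- Change the basis in one index at a time, each time by `sum_apply_self_orthonormalBasis`.
lemma sum_sum_smul_orthonormalBasis (B : E →ₗ[ℝ] E →ₗ[ℝ] ℝ) (K : E →ₗ[ℝ] E →ₗ[ℝ] F)
    (b : OrthonormalBasis ι ℝ E) (c : OrthonormalBasis κ ℝ E) :
    ∑ i, ∑ j, B (b i) (b j) • K (b i) (b j) = ∑ i, ∑ j, B (c i) (c j) • K (c i) (c j) := by
  let P (d : E) : E →ₗ[ℝ] E →ₗ[ℝ] F := (LinearMap.lsmul ℝ F).compl₁₂ (B.flip d) (K.flip d)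
  let Q (d : E) : E →ₗ[ℝ] E →ₗ[ℝ] F := (LinearMap.lsmul ℝ F).compl₁₂ (B d) (K d)
  calc ∑ i, ∑ j, B (b i) (b j) • K (b i) (b j) = ∑ i, (∑ j, P (b j)) (b i) (b i) := by simp [P]
    _ = ∑ i, (∑ j, P (b j)) (c i) (c i) := sum_apply_self_orthonormalBasis _ b c
    _ = ∑ j, (∑ i, Q (c i)) (b j) (b j) := by simp [P, Q]; exact Finset.sum_comm
    _ = ∑ j, (∑ i, Q (c i)) (c j) (c j) := sum_apply_self_orthonormalBasis _ b c
    _ = ∑ i, ∑ j, B (c i) (c j) • K (c i) (c j) := by simp [Q]; exact Finset.sum_comm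

lemma sum_sum_eq_two_nsmul_sum_sum_lt {M : Type*} [AddCommMonoid M] [LinearOrder ι] (G : ι → ι → M)
    (hG : ∀ i j, G j i = G i j) (hdiag : ∀ i, G i i = 0) :
    ∑ i, ∑ j, G i j = 2 • ∑ i, ∑ j, if i < j then G i j else 0 := by
  have hsplit : ∀ i j, G i j = (if i < j then G i j else 0) + (if j < i then G j i else 0) := by
    intro i j
    rcases lt_trichotomy i j with h | rfl | h
    · simp [h, h.not_gt]
    · simp [hdiag]
    · rw [if_neg h.not_gt, if_pos h, hG, zero_add]
  rw [Finset.sum_congr rfl fun i _ => Finset.sum_congr rfl fun j _ => hsplit i j]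
  simp_rw [two_nsmul, Finset.sum_add_distrib]
  rw [Finset.sum_comm (f := fun i j => if j < i then G j i else 0)]

lemma sum_sum_smul_eq_two_nsmul_sum_sum_lt [LinearOrder ι]
    {B : E →ₗ[ℝ] E →ₗ[ℝ] ℝ} {K : E →ₗ[ℝ] E →ₗ[ℝ] F} (hB : ∀ x y, B y x = -B x y)
    (hK : ∀ x y, inner ℝ x y = 0 → K y x = -K x y) (b : OrthonormalBasis ι ℝ E) :
    ∑ i, ∑ j, B (b i) (b j) • K (b i) (b j)
      = 2 • ∑ i, ∑ j, (if i < j then B (b i) (b j) • K (b i) (b j) else 0) := by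
  have hBdiag (x : E) : B x x = 0 := by linarith [hB x x]
  refine sum_sum_eq_two_nsmul_sum_sum_lt _ (fun i j => ?_) (fun i => by simp [hBdiag])
  rcases eq_or_ne i j with rfl | hij
  · rfl
  · rw [hB, hK _ _ (b.orthonormal.inner_eq_zero hij), neg_smul, smul_neg, neg_neg]

lemma sum_sum_lt_smul_orthonormalBasis [LinearOrder ι] [LinearOrder κ]
    {B : E →ₗ[ℝ] E →ₗ[ℝ] ℝ} {K : E →ₗ[ℝ] E →ₗ[ℝ] F} (hB : ∀ x y, B y x = -B x y)
    (hK : ∀ x y, inner ℝ x y = 0 → K y x = -K x y)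
    (b : OrthonormalBasis ι ℝ E) (c : OrthonormalBasis κ ℝ E) :
    ∑ i, ∑ j, (if i < j then B (b i) (b j) • K (b i) (b j) else 0)
      = ∑ i, ∑ j, (if i < j then B (c i) (c j) • K (c i) (c j) else 0) := by
  have h := sum_sum_smul_orthonormalBasis B K b c
  rw [sum_sum_smul_eq_two_nsmul_sum_sum_lt hB hK b, sum_sum_smul_eq_two_nsmul_sum_sum_lt hB hK c,
    ← Nat.cast_smul_eq_nsmul ℝ, ← Nat.cast_smul_eq_nsmul ℝ] at h
  exact smul_right_injective F (by norm_num) h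

end OrthonormalSums

section Eta

variable {r n : ℕ}

lemma wedgeMat_add_left (X X' Y : Rn n) :
    wedgeMat n (X + X') Y = wedgeMat n X Y + wedgeMat n X' Y := by
  simp only [wedgeMat, vecMat_add, add_mul, inner_add_left, ofReal_add, add_smul]
  abel

lemma wedgeMat_smul_left (c : ℝ) (X Y : Rn n) :
    wedgeMat n (c • X) Y = (c : ℂ) • wedgeMat n X Y := by
  simp only [wedgeMat, vecMat_smul, smul_mul_assoc, real_inner_smul_left, ofReal_mul, smul_add,
    smul_smul]

lemma wedgeMat_swap (X Y : Rn n) : wedgeMat n Y X = -wedgeMat n X Y := by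
  have h := vecMat_mul_add_mul X Y
  rw [wedgeMat, wedgeMat, real_inner_comm, eq_sub_of_add_eq' h]
  push_cast; module

lemma etaM_add_left (M : Matrix (SpIdx r) (SpIdx r) ℂ) (φ : TwSpinor r n) (X X' Y : Rn n) :
    etaM r n M φ (X + X') Y = etaM r n M φ X Y + etaM r n M φ X' Y := by
  simp [etaM, wedgeMat_add_left, add_actN]

lemma etaM_smul_left (M : Matrix (SpIdx r) (SpIdx r) ℂ) (φ : TwSpinor r n) (c : ℝ) (X Y : Rn n) :
    etaM r n M φ (c • X) Y = c * etaM r n M φ X Y := by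
  rw [etaM, etaM, wedgeMat_smul_left, smul_actN, inner_smul_left, conj_ofReal, re_ofReal_mul]

lemma etaM_swap (M : Matrix (SpIdx r) (SpIdx r) ℂ) (φ : TwSpinor r n) (X Y : Rn n) :
    etaM r n M φ Y X = -etaM r n M φ X Y := by
  rw [etaM, etaM, wedgeMat_swap, neg_actN, inner_neg_left, neg_re]

def etaForm (r n : ℕ) (M : Matrix (SpIdx r) (SpIdx r) ℂ) (φ : TwSpinor r n) :
    Rn n →ₗ[ℝ] Rn n →ₗ[ℝ] ℝ :=
  LinearMap.mk₂ ℝ (etaM r n M φ) (etaM_add_left M φ) (etaM_smul_left M φ)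
    (fun X Y Y' => by
      rw [etaM_swap M φ (Y + Y'), etaM_add_left, etaM_swap M φ Y, etaM_swap M φ Y']; ring)
    (fun c X Y => by
      rw [etaM_swap M φ (c • Y), etaM_smul_left, etaM_swap M φ Y, smul_eq_mul]; ring)

def cliffordPair (r n : ℕ) (φ : TwSpinor r n) : Rn n →ₗ[ℝ] Rn n →ₗ[ℝ] TwSpinor r n :=
  LinearMap.mk₂ ℝ (fun X Y => actN (vecMat n X * vecMat n Y) φ)
    (fun X X' Y => by rw [vecMat_add, add_mul, add_actN])
    (fun c X Y => by rw [vecMat_smul, smul_mul_assoc, smul_actN, coe_smul])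
    (fun X Y Y' => by rw [vecMat_add, mul_add, add_actN])
    (fun c X Y => by rw [vecMat_smul, mul_smul_comm, smul_actN, coe_smul])

lemma cliffordPair_swap (φ : TwSpinor r n) (X Y : Rn n) (hXY : inner ℝ X Y = 0) :
    cliffordPair r n φ Y X = -cliffordPair r n φ X Y := by
  have h := vecMat_mul_add_mul Y X
  rw [real_inner_comm, hXY] at h
  simp [cliffordPair, eq_neg_of_add_eq_zero_left (h.trans (by simp)), neg_actN]

lemma etaActionM_eq_sum_orthonormalBasis (M : Matrix (SpIdx r) (SpIdx r) ℂ) (φ : TwSpinor r n)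
    (b : OrthonormalBasis (Fin n) ℝ (Rn n)) :
    etaActionM r n M φ = ∑ i, ∑ j, if i < j then
      (etaM r n M φ (b i) (b j) : ℂ) • actN (vecMat n (b i) * vecMat n (b j)) φ else 0 := by
  have hstd := sum_sum_lt_smul_orthonormalBasis (B := etaForm r n M φ) (etaM_swap M φ)
    (cliffordPair_swap φ) (EuclideanSpace.basisFun (Fin n) ℝ) b
  simp only [etaForm, cliffordPair, LinearMap.mk₂_apply, coe_smul] at hstd ⊢
  rw [← hstd, etaActionM]
  simp [← vecMat_stdBasis, _root_.stdBasis]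

end Eta

section PurityConditions

variable {r n : ℕ}

lemma map_vecMat_mul_vecMat_eq_zero {F : Type*} [AddCommGroup F] [Module ℝ F]
    (Φ : Matrix (SpIdx r) (SpIdx r) ℂ →ₗ[ℝ] F)
    (hΦ : ∀ a b : Fin r, a < b → Φ (genMat r a * genMat r b) = 0)
    {u w : Rn r} (huw : inner ℝ u w = 0) : Φ (vecMat r u * vecMat r w) = 0 := by
  have hoff (a b : Fin r) (hab : a ≠ b) : Φ (genMat r a * genMat r b) = 0 := by
    rcases hab.lt_or_gt with h | h
    · exact hΦ a b h
    · rw [genMat_anticomm a.isLt b.isLt (Fin.val_ne_of_ne hab), map_neg, hΦ b a h, neg_zero]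
  have hdiag : ∑ a : Fin r, (u a * w a) • Φ (genMat r a * genMat r a) = 0 := by
    have : ∑ a : Fin r, u a * w a = 0 := by simpa [PiLp.inner_apply, mul_comm] using huw
    simp_rw [genMat_mul_self, ← Finset.sum_smul, this, zero_smul]
  simp_rw [vecMat_mul_vecMat, map_sum, coe_smul, map_smul]
  rw [← hdiag]
  refine Finset.sum_congr rfl fun a _ => Finset.sum_eq_single a (fun b _ hba => ?_) (by simp)
  rw [hoff a b hba.symm, smul_zero]

lemma etaM_add_matrix (M N : Matrix (SpIdx r) (SpIdx r) ℂ) (φ : TwSpinor r n) (X Y : Rn n) :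
    etaM r n (M + N) φ X Y = etaM r n M φ X Y + etaM r n N φ X Y := by
  simp [etaM, add_actR, actN_add]

lemma etaM_smul_matrix (c : ℝ) (M : Matrix (SpIdx r) (SpIdx r) ℂ) (φ : TwSpinor r n)
    (X Y : Rn n) : etaM r n ((c : ℂ) • M) φ X Y = c * etaM r n M φ X Y := by
  rw [etaM, etaM, smul_actR, actN_smul, inner_smul_left, conj_ofReal, re_ofReal_mul]

def etaPlusMap (r n : ℕ) (φ : TwSpinor r n) :
    Matrix (SpIdx r) (SpIdx r) ℂ →ₗ[ℝ] TwSpinor r n where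
  toFun M := etaActionM r n M φ + actR M φ
  map_add' M N := by
    simp only [etaActionM, etaM_add_matrix, ofReal_add, add_smul, add_actR, Finset.sum_add_distrib,
      ite_add_zero]
    abel
  map_smul' c M := by
    simp only [etaActionM, ← coe_smul, etaM_smul_matrix, smul_actR, ofReal_mul, mul_smul,
      Finset.smul_sum, smul_ite, smul_zero, smul_add, RingHom.id_apply]

def innerActRMap (r n : ℕ) (φ : TwSpinor r n) : Matrix (SpIdx r) (SpIdx r) ℂ →ₗ[ℝ] ℂ where
  toFun M := inner ℂ (actR M φ) φ
  map_add' M N := by simp [add_actR]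
  map_smul' c M := by simp [← coe_smul, smul_actR, mul_comm]

lemma etaActionM_add_actR_vecMat_mul_vecMat {φ : TwSpinor r n}
    (hφ : ∀ k l : Fin r, k < l → etaActionM r n (genMat r k * genMat r l) φ
      + actR (genMat r k * genMat r l) φ = 0)
    {u w : Rn r} (huw : inner ℝ u w = 0) :
    etaActionM r n (vecMat r u * vecMat r w) φ + actR (vecMat r u * vecMat r w) φ = 0 :=
  map_vecMat_mul_vecMat_eq_zero (etaPlusMap r n φ) hφ huw

lemma inner_actR_vecMat_mul_vecMat {φ : TwSpinor r n}
    (hφ : ∀ k l : Fin r, k < l → inner ℂ (actR (genMat r k * genMat r l) φ) φ = 0)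
    {u w : Rn r} (huw : inner ℝ u w = 0) :
    inner ℂ (actR (vecMat r u * vecMat r w) φ) φ = 0 :=
  map_vecMat_mul_vecMat_eq_zero (innerActRMap r n φ) hφ huw

end PurityConditions

section Covariance

variable {r n : ℕ} {z : ℂ} {h : Matrix (SpIdx r) (SpIdx r) ℂ} {g : Matrix (SpIdx n) (SpIdx n) ℂ}

lemma conjTranspose_smul_kronecker_mul_self (hz : ‖z‖ = 1) (hh : h ∈ unitary _)
    (hg : g ∈ unitary _) : (z • h ⊗ₖ g)ᴴ * (z • h ⊗ₖ g) = 1 := by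
  rw [conjTranspose_smul, conjTranspose_kronecker, smul_mul_smul_comm, ← mul_kronecker_mul,
    ← star_eq_conjTranspose, ← star_eq_conjTranspose, Unitary.star_mul_self_of_mem hh,
    Unitary.star_mul_self_of_mem hg, one_kronecker_one, star_def, conj_mul', hz]
  simp

lemma actN_twAct_smul_kronecker (hg : g ∈ unitary _) (W : Matrix (SpIdx n) (SpIdx n) ℂ)
    (φ : TwSpinor r n) :
    actN W (twAct (z • h ⊗ₖ g) φ) = twAct (z • h ⊗ₖ g) (actN (gᴴ * W * g) φ) := by
  rw [actN_eq, actN_eq, ← twAct_mul, ← twAct_mul, mul_smul_comm, smul_mul_assoc,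
    ← mul_kronecker_mul, ← mul_kronecker_mul, one_mul, mul_one, ← mul_assoc, ← mul_assoc,
    ← star_eq_conjTranspose, Unitary.mul_star_self_of_mem hg, one_mul]

lemma actR_twAct_smul_kronecker (hh : h ∈ unitary _) (M : Matrix (SpIdx r) (SpIdx r) ℂ)
    (φ : TwSpinor r n) :
    actR M (twAct (z • h ⊗ₖ g) φ) = twAct (z • h ⊗ₖ g) (actR (hᴴ * M * h) φ) := by
  rw [actR_eq, actR_eq, ← twAct_mul, ← twAct_mul, mul_smul_comm, smul_mul_assoc,
    ← mul_kronecker_mul, ← mul_kronecker_mul, one_mul, mul_one, ← mul_assoc, ← mul_assoc,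
    ← star_eq_conjTranspose, Unitary.mul_star_self_of_mem hh, one_mul]

lemma actN_vecMat_twAct_smul_kronecker (hg : g ∈ unitary _) {g₁ : Rn n → Rn n}
    (hg₁ : ∀ x, g * vecMat n x = vecMat n (g₁ x) * g) (X : Rn n) (φ : TwSpinor r n) :
    actN (vecMat n (g₁ X)) (twAct (z • h ⊗ₖ g) φ) = twAct (z • h ⊗ₖ g) (actN (vecMat n X) φ) := by
  rw [actN_twAct_smul_kronecker hg, mul_assoc, ← hg₁, ← mul_assoc, ← star_eq_conjTranspose,
    Unitary.star_mul_self_of_mem hg, one_mul]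

lemma actN_vecMat_twAct_eq_I_smul (hg : g ∈ unitary _) {g₁ : Rn n → Rn n}
    (hg₁ : ∀ x, g * vecMat n x = vecMat n (g₁ x) * g) {φ : TwSpinor r n} {X Y : Rn n}
    (hXY : actN (vecMat n X) φ = I • actN (vecMat n Y) φ) :
    actN (vecMat n (g₁ X)) (twAct (z • h ⊗ₖ g) φ)
      = I • actN (vecMat n (g₁ Y)) (twAct (z • h ⊗ₖ g) φ) := by
  rw [actN_vecMat_twAct_smul_kronecker hg hg₁, actN_vecMat_twAct_smul_kronecker hg hg₁, hXY,
    twAct_eq, twAct_eq, map_smul]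

variable {σ : Rn n ≃ₗᵢ[ℝ] Rn n}

lemma conjTranspose_mul_vecMat_mul_vecMat_mul (hg : g ∈ unitary _)
    (hσ : ∀ y, gᴴ * vecMat n y * g = vecMat n (σ y)) (X Y : Rn n) :
    gᴴ * (vecMat n X * vecMat n Y) * g = vecMat n (σ X) * vecMat n (σ Y) := by
  rw [← hσ, ← hσ]
  simp only [mul_assoc]
  rw [← mul_assoc g gᴴ, ← star_eq_conjTranspose, Unitary.mul_star_self_of_mem hg, one_mul]

lemma conjTranspose_mul_wedgeMat_mul (hg : g ∈ unitary _)
    (hσ : ∀ y, gᴴ * vecMat n y * g = vecMat n (σ y)) (X Y : Rn n) :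
    gᴴ * wedgeMat n X Y * g = wedgeMat n (σ X) (σ Y) := by
  rw [wedgeMat, wedgeMat, mul_add, add_mul, conjTranspose_mul_vecMat_mul_vecMat_mul hg hσ,
    mul_smul_comm, smul_mul_assoc, mul_one, ← star_eq_conjTranspose,
    Unitary.star_mul_self_of_mem hg, σ.inner_map_map]

lemma etaM_twAct_smul_kronecker (hz : ‖z‖ = 1) (hh : h ∈ unitary _) (hg : g ∈ unitary _)
    (hσ : ∀ y, gᴴ * vecMat n y * g = vecMat n (σ y)) (M : Matrix (SpIdx r) (SpIdx r) ℂ)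
    (φ : TwSpinor r n) (X Y : Rn n) :
    etaM r n M (twAct (z • h ⊗ₖ g) φ) X Y = etaM r n (hᴴ * M * h) φ (σ X) (σ Y) := by
  rw [etaM, etaM, actR_twAct_smul_kronecker hh, actN_twAct_smul_kronecker hg,
    inner_twAct_twAct (conjTranspose_smul_kronecker_mul_self hz hh hg),
    conjTranspose_mul_wedgeMat_mul hg hσ]

lemma etaActionM_twAct_smul_kronecker (hz : ‖z‖ = 1) (hh : h ∈ unitary _) (hg : g ∈ unitary _)
    (hσ : ∀ y, gᴴ * vecMat n y * g = vecMat n (σ y)) (M : Matrix (SpIdx r) (SpIdx r) ℂ)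
    (φ : TwSpinor r n) :
    etaActionM r n M (twAct (z • h ⊗ₖ g) φ)
      = twAct (z • h ⊗ₖ g) (etaActionM r n (hᴴ * M * h) φ) := by
  let b := EuclideanSpace.basisFun (Fin n) ℝ
  rw [etaActionM_eq_sum_orthonormalBasis _ _ b, etaActionM_eq_sum_orthonormalBasis _ _ (b.map σ)]
  simp only [etaM_twAct_smul_kronecker hz hh hg hσ, actN_twAct_smul_kronecker hg,
    conjTranspose_mul_vecMat_mul_vecMat_mul hg hσ, OrthonormalBasis.map_apply]
  simp only [twAct_eq, map_sum, apply_ite, map_smul, map_zero]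

end Covariance

lemma conjTranspose_mul_volMat_mul {r : ℕ} (hr : Even r) {h : Matrix (SpIdx r) (SpIdx r) ℂ}
    (hh : h ∈ SpinMat r) : hᴴ * volMat r * h = volMat r := by
  rw [mul_assoc, volMat_commute_of_mem_spinMat hr hh, ← mul_assoc, ← star_eq_conjTranspose,
    Unitary.star_mul_self_of_mem (mem_unitary_of_mem_spinMat hh), one_mul]

lemma inner_map_stdBasis_map_stdBasis {r : ℕ} (τ : Rn r ≃ₗᵢ[ℝ] Rn r) {k l : Fin r} (hkl : k ≠ l) :
    inner ℝ (τ (_root_.stdBasis r k)) (τ (_root_.stdBasis r l)) = 0 := by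
  simp [τ.inner_map_map, _root_.stdBasis, EuclideanSpace.inner_single_left, hkl]

theorem IsPartiallyPure.twAct_smul_kronecker {r n : ℕ} {φ : TwSpinor r n}
    {V : Submodule ℝ (Rn n)} (hpp : IsPartiallyPure r n φ V) {g : Matrix (SpIdx n) (SpIdx n) ℂ}
    {h : Matrix (SpIdx r) (SpIdx r) ℂ} {z : ℂ} (hg : g ∈ SpinMat n) (hh : h ∈ SpinMat r)
    (hz : ‖z‖ = 1) (g₁ : Rn n →ₗ[ℝ] Rn n) (hg₁ : ∀ x, g * vecMat n x = vecMat n (g₁ x) * g) :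
    IsPartiallyPure r n (twAct (z • h ⊗ₖ g) φ) (V.map g₁) := by
  have hgU := mem_unitary_of_mem_spinMat hg
  have hhU := mem_unitary_of_mem_spinMat hh
  have hU := conjTranspose_smul_kronecker_mul_self hz hhU hgU
  obtain ⟨σ, hσ⟩ := exists_conjTranspose_mul_vecMat_mul_of_mem_spinMat hg
  obtain ⟨τ, hτ⟩ := exists_conjTranspose_mul_vecMat_mul_of_mem_spinMat hh
  have hgenMat (k l : Fin r) : hᴴ * (genMat r k * genMat r l) * h
      = vecMat r (τ (_root_.stdBasis r k)) * vecMat r (τ (_root_.stdBasis r l)) := by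
    rw [← vecMat_stdBasis, ← vecMat_stdBasis, conjTranspose_mul_vecMat_mul_vecMat_mul hhU hτ]
  have hg₁σ : g₁ = (σ.symm : Rn n ≃ₗᵢ[ℝ] Rn n).toLinearEquiv :=
    LinearMap.ext (apply_eq_symm_of_intertwines (Unitary.star_mul_self_of_mem hgU) hσ hg₁)
  refine ⟨hpp.lt_dim, ?_, ?_, ?_, ?_, ?_, ?_, ?_⟩
  · by_cases hodd : r % 2 = 1
    · exact Or.inl hodd
    · right
      rw [actR_twAct_smul_kronecker hhU, mul_smul_comm, smul_mul_assoc,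
        conjTranspose_mul_volMat_mul (Nat.even_iff.mpr (by omega)) hh,
        hpp.mem_sigma.resolve_left hodd]
  · rw [norm_twAct hU, hpp.unit_norm]
  · rw [hg₁σ, LinearEquiv.finrank_map_eq, hpp.dim_eq]
  · rintro _ ⟨X, hX, rfl⟩
    obtain ⟨Y, hY, hXY⟩ := hpp.exists_conj X hX
    exact ⟨g₁ Y, Submodule.mem_map_of_mem hY, actN_vecMat_twAct_eq_I_smul hgU hg₁ hXY⟩
  · intro k l hkl
    rw [etaActionM_twAct_smul_kronecker hz hhU hgU hσ, actR_twAct_smul_kronecker hhU, hgenMat,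
      twAct_eq, twAct_eq, ← map_add, etaActionM_add_actR_vecMat_mul_vecMat hpp.eta_plus
        (inner_map_stdBasis_map_stdBasis τ hkl.ne), map_zero]
  · intro k l hkl
    rw [actR_twAct_smul_kronecker hhU, inner_twAct_twAct hU, hgenMat,
      inner_actR_vecMat_mul_vecMat hpp.f_orth (inner_map_stdBasis_map_stdBasis τ hkl.ne)]
  · rintro rfl
    rw [actR_twAct_smul_kronecker hhU, inner_twAct_twAct hU,
      conjTranspose_mul_volMat_mul (by decide) hh, hpp.vol_orth rfl]

-- `u = z • (h ⊗ g)`; `g₁ = λ_n(g)` is pinned down by the intertwining relation `hg₁`.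
theorem stmt14_general (n r : ℕ) (φ : TwSpinor r n) (V : Submodule ℝ (Rn n))
    (hpp : IsPartiallyPure r n φ V) (J : Rn n → Rn n) (hJ : IsJ r n φ V J)
    (g : Matrix (SpIdx n) (SpIdx n) ℂ) (h : Matrix (SpIdx r) (SpIdx r) ℂ) (z : ℂ)
    (hg : g ∈ SpinMat n) (hh : h ∈ SpinMat r) (hz : ‖z‖ = 1)
    (g₁ : Rn n →ₗ[ℝ] Rn n)
    (hg₁ : ∀ x : Rn n, g * vecMat n x = vecMat n (g₁ x) * g) :
    IsPartiallyPure r n (twAct (z • kronOp h g) φ) (V.map g₁) ∧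
    ∀ X ∈ V,
      actN (vecMat n (g₁ X)) (twAct (z • kronOp h g) φ)
        = I • actN (vecMat n (g₁ (J X))) (twAct (z • kronOp h g) φ) :=
  ⟨hpp.twAct_smul_kronecker hg hh hz g₁ hg₁,
    fun X hX => actN_vecMat_twAct_eq_I_smul (mem_unitary_of_mem_spinMat hg) hg₁ (hJ.2 X hX)⟩

/-- the action of Spin^{c,r}(n) preserves partially pure spinors;
moreover V^{u·φ} = g₁(V^φ) and J^{u·φ} = g₁ ∘ J^φ ∘ g₁⁻¹.  Here u = z·(h ⊗ g) with
g ∈ Spin(n), h ∈ Spin(r), |z| = 1, and g₁ = λ_n(g) is characterized by the intertwining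
relation g·κ(x) = κ(g₁ x)·g. -/
theorem stmt14 (n r : ℕ) (hr : 2 ≤ r) (φ : TwSpinor r n) (V : Submodule ℝ (Rn n))
    (hpp : IsPartiallyPure r n φ V) (J : Rn n → Rn n) (hJ : IsJ r n φ V J)
    (g : Matrix (SpIdx n) (SpIdx n) ℂ) (h : Matrix (SpIdx r) (SpIdx r) ℂ) (z : ℂ)
    (hg : g ∈ SpinMat n) (hh : h ∈ SpinMat r) (hz : ‖z‖ = 1)
    (g₁ : Rn n →ₗ[ℝ] Rn n)
    (hg₁ : ∀ x : Rn n, g * vecMat n x = vecMat n (g₁ x) * g) :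
    IsPartiallyPure r n (twAct (z • kronOp h g) φ) (V.map g₁) ∧
    ∀ X ∈ V,
      actN (vecMat n (g₁ X)) (twAct (z • kronOp h g) φ)
        = I • actN (vecMat n (g₁ (J X))) (twAct (z • kronOp h g) φ) :=
  stmt14_general n r φ V hpp J hJ g h z hg hh hz g₁ hg₁
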